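/- For each i with 2 ≤ i ≤ m, there exist constants C_i, D_i > 0 such that for all r ∈ ℤ with r ≠ 0: C_i |r|^{i-1} ≤ |φ^r(a_i)|_F ≤ D_i |r|^{i-1}. -/

import Mathlib

open FreeGroup SemidirectProduct

/-- Words on the letters `a₁^{±1}, …, a_m^{±1}` (`(i, true)` is `a_{i+1}`,
`(i, false)` is `a_{i+1}⁻¹`, with 0-based `Fin`-indexing of the generators). -/
abbrev FWord (m : ℕ) := List (Fin m × Bool)

/-- A word is freely reduced. -/
def Reduced {m : ℕ} (w : FWord m) : Prop := FreeGroup.reduce w = w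

/-- `φ` is the automorphism of `F = F(a₁, …, a_m)` with `φ(a₁) = a₁` and
`φ(aᵢ) = aᵢ aᵢ₋₁` for `2 ≤ i ≤ m`. -/
def IsHydraAut (m : ℕ) (φ : FreeGroup (Fin m) ≃* FreeGroup (Fin m)) : Prop :=
  ∀ i : Fin m, φ (FreeGroup.of i) =
    if i.val = 0 then FreeGroup.of i
    else FreeGroup.of i *
      FreeGroup.of (⟨i.val - 1, Nat.lt_of_le_of_lt (Nat.sub_le _ _) i.isLt⟩ : Fin m)

/-- The free-by-cyclic group `H_m = F ⋊_φ ℤ`; here `s = inr (ofAdd 1)` and the defining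
relation `s⁻¹ aᵢ s = φ(aᵢ)` holds.  The normal form `ũ s^p` is the element
`⟨ũ, Multiplicative.ofAdd p⟩`. -/
abbrev Hgrp (m : ℕ) (φ : FreeGroup (Fin m) ≃* FreeGroup (Fin m)) :=
  FreeGroup (Fin m) ⋊[zpowersHom (MulAut (FreeGroup (Fin m))) φ⁻¹] Multiplicative ℤ

/-- Letters of words over the generators of `H_m`: `some i` is `a_{i+1}`, `none` is `s`. -/
abbrev HWord (m : ℕ) := List (Option (Fin m) × Bool)

def hLetter {m : ℕ} (φ : FreeGroup (Fin m) ≃* FreeGroup (Fin m)) (x : Option (Fin m) × Bool) :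
    Hgrp m φ :=
  match x.1 with
  | some i => cond x.2 (SemidirectProduct.inl (FreeGroup.of i))
      (SemidirectProduct.inl (FreeGroup.of i))⁻¹
  | none => cond x.2 (SemidirectProduct.inr (Multiplicative.ofAdd (1:ℤ)))
      (SemidirectProduct.inr (Multiplicative.ofAdd (1:ℤ)))⁻¹

/-- The element of `H_m` represented by a word on `a₁^{±1}, …, a_m^{±1}, s^{±1}`. -/
def evalH {m : ℕ} (φ : FreeGroup (Fin m) ≃* FreeGroup (Fin m)) (w : HWord m) : Hgrp m φ :=
  (w.map (hLetter φ)).prod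

/-- Word length in `H_m` w.r.t. the generating set `{a₁, …, a_m, s}`. -/
noncomputable def lenH {m : ℕ} (φ : FreeGroup (Fin m) ≃* FreeGroup (Fin m)) (g : Hgrp m φ) : ℕ :=
  sInf {n | ∃ w : HWord m, evalH φ w = g ∧ w.length = n}

/-- Word length in `F` w.r.t. the generating set `{a₁, …, a_m}`. -/
noncomputable def lenF {m : ℕ} (g : FreeGroup (Fin m)) : ℕ :=
  sInf {n | ∃ w : FWord m, FreeGroup.mk w = g ∧ w.length = n}

/-- The rank of a word: the maximal `i` such that `aᵢ^{±1}` occurs in it (a letter with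
`Fin`-index `j` is `a_{j+1}`, so it contributes `j+1`); the empty word has rank `0`. -/
def wrank {m : ℕ} (w : FWord m) : ℕ := (w.map (fun x => x.1.val + 1)).foldr max 0

/-- The four types of rank-`i` pieces: `aᵢ u`, `u aᵢ⁻¹`, `aᵢ u aᵢ⁻¹`, `u`. -/
inductive PieceType | head | tail | both | plain
deriving DecidableEq

/-- `π` is a rank-`i` piece of the given type: `aᵢ u`, `u aᵢ⁻¹`, `aᵢ u aᵢ⁻¹` or `u`,
where `u` is a (possibly empty) word of rank at most `i - 1`.  Pieces of the first three
types have strict rank `i`. -/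
def IsPieceType {m : ℕ} (i : ℕ) (t : PieceType) (π : FWord m) : Prop :=
  match t with
  | .head => ∃ (x : Fin m × Bool) (u : FWord m),
      π = x :: u ∧ x.1.val + 1 = i ∧ x.2 = true ∧ wrank u < i
  | .tail => ∃ (x : Fin m × Bool) (u : FWord m),
      π = u ++ [x] ∧ x.1.val + 1 = i ∧ x.2 = false ∧ wrank u < i
  | .both => ∃ (j : Fin m) (u : FWord m),
      π = (j, true) :: (u ++ [(j, false)]) ∧ j.val + 1 = i ∧ wrank u < i
  | .plain => wrank π < i

def IsPiece {m : ℕ} (i : ℕ) (π : FWord m) : Prop := ∃ t, IsPieceType i t π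

/-- The rank-`i` piece decomposition of `w`: a decomposition into rank-`i` pieces
with the minimal possible number of pieces. -/
def IsPieceDecomp {m : ℕ} (i : ℕ) (w : FWord m) (L : List (FWord m)) : Prop :=
  L.flatten = w ∧ (∀ π ∈ L, IsPiece i π) ∧
    ∀ L' : List (FWord m), L'.flatten = w → (∀ π ∈ L', IsPiece i π) → L.length ≤ L'.length

/-- The number of pieces in the rank-`i` decomposition of `w`, for `i = wrank w`. -/
noncomputable def piecesCount {m : ℕ} (w : FWord m) : ℕ :=
  sInf {p | ∃ L : List (FWord m),
    L.flatten = w ∧ (∀ π ∈ L, IsPiece (wrank w) π) ∧ L.length = p}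

/-- The number of pieces of an element of the free group. -/
noncomputable def piecesCountF {m : ℕ} (g : FreeGroup (Fin m)) : ℕ :=
  piecesCount (FreeGroup.toWord g)

/-!
Write `x_k(r) = φ^r(a_{k+1})`, so `x_0(r) = a₁` and `x_k(r+1) = x_k(r) x_{k-1}(r)`.
Consecutive terms `x_k(r)`, `x_k(r+1)` thus differ in length by at most `|x_{k-1}(r)|`, and
induction on `k` gives `|x_k(r)| ≤ (|r|+1)^k`. For the lower bound, the exponent sum of `a₁`
in `x_k(r)` obeys Pascal's rule, so it is the binomial coefficient `(r choose k)`, whose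
absolute value is at least `|r|^k / (2^k k!)` once `|r| ≥ 2k`; for the finitely many
remaining `r ≠ 0` it suffices that `x_k(r) ≠ 1`.
-/

lemma lenF_eq_norm {m : ℕ} (g : FreeGroup (Fin m)) : lenF g = g.norm :=
  le_antisymm (Nat.sInf_le ⟨g.toWord, g.mk_toWord, rfl⟩)
    (le_csInf ⟨_, g.toWord, g.mk_toWord, rfl⟩ fun _ ⟨_, hw, hn⟩ => hw ▸ hn ▸ norm_mk_le)

namespace FreeGroup

variable {α : Type*} [DecidableEq α]

lemma abs_norm_mul_sub_norm_le (g h : FreeGroup α) :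
    |((g * h).norm : ℤ) - g.norm| ≤ h.norm := by
  have h₁ := norm_mul_le g h
  have h₂ := norm_mul_le (g * h) h⁻¹
  rw [mul_inv_cancel_right, norm_inv_eq] at h₂
  rw [abs_sub_le_iff]
  omega

def exponentSum (a : α) : FreeGroup α →* Multiplicative ℤ :=
  lift (Pi.mulSingle a (Multiplicative.ofAdd 1))

lemma exponentSum_of (a b : α) :
    (exponentSum a (of b)).toAdd = if b = a then 1 else 0 := by
  simp [exponentSum, Pi.mulSingle_apply]
  split <;> rfl

lemma abs_exponentSum_le_norm (a : α) (g : FreeGroup α) :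
    |(exponentSum a g).toAdd| ≤ g.norm := by
  suffices ∀ L : List (α × Bool), |(exponentSum a (mk L)).toAdd| ≤ L.length by
    simpa only [norm, mk_toWord] using this g.toWord
  intro L
  induction L with
  | nil => simp [← one_eq_mk]
  | cons x L ih =>
    have hx : |(exponentSum a (mk [x])).toAdd| ≤ 1 := by
      obtain ⟨b, _ | _⟩ := x
      · change |(exponentSum a (of b)⁻¹).toAdd| ≤ 1
        rw [_root_.map_inv, toAdd_inv, abs_neg, exponentSum_of]
        split <;> simp
      · change |(exponentSum a (of b)).toAdd| ≤ 1
        rw [exponentSum_of]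
        split <;> simp
    rw [← List.singleton_append, ← mul_mk, _root_.map_mul, toAdd_mul, List.length_append,
      List.length_singleton]
    push_cast
    linarith [abs_add_le (exponentSum a (mk [x])).toAdd (exponentSum a (mk L)).toAdd]

end FreeGroup

lemma Int.abs_le_add_one_pow_succ_of_abs_sub_le {f : ℤ → ℤ} {k : ℕ} (h₀ : |f 0| ≤ 1)
    (hstep : ∀ r, |f (r + 1) - f r| ≤ (|r| + 1) ^ k) (r : ℤ) :
    |f r| ≤ (|r| + 1) ^ (k + 1) := by
  have hgrowth (a : ℤ) (ha : 0 ≤ a) : a ^ (k + 1) + (a + 1) ^ k ≤ (a + 1) ^ (k + 1) :=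
    calc a ^ (k + 1) + (a + 1) ^ k = a * a ^ k + (a + 1) ^ k := by ring
      _ ≤ a * (a + 1) ^ k + (a + 1) ^ k := by gcongr; linarith
      _ = (a + 1) ^ (k + 1) := by ring
  induction r using Int.induction_on with
  | zero => simpa using h₀
  | succ n ih =>
    have hn : (0 : ℤ) ≤ n := n.cast_nonneg
    have hs := hstep n
    rw [abs_of_nonneg hn] at hs ih
    rw [abs_of_nonneg (by positivity : (0 : ℤ) ≤ n + 1)]
    have := abs_sub_abs_le_abs_sub (f (n + 1)) (f n)
    have := hgrowth (n + 1) (by positivity)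
    have hle : (n : ℤ) + 1 ≤ n + 1 + 1 := by linarith
    have := pow_le_pow_left₀ (by positivity) hle k
    linarith
  | pred n ih =>
    have habs : |(-(n:ℤ) - 1)| = n + 1 := by
      rw [← neg_add', abs_neg]; exact abs_of_nonneg (by positivity)
    have hs := hstep (-n - 1)
    rw [sub_add_cancel, habs, abs_sub_comm] at hs
    have := abs_sub_abs_le_abs_sub (f (-n - 1)) (f (-n))
    have := hgrowth (n + 1) (by positivity)
    rw [habs]
    rw [abs_neg, abs_of_nonneg (n.cast_nonneg : (0 : ℤ) ≤ n)] at ih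
    linarith

lemma Int.abs_pow_le_two_pow_mul_factorial_mul_abs_choose {k : ℕ} {r : ℤ} (hr : 2 * k ≤ |r|) :
    |r| ^ k ≤ 2 ^ k * k.factorial * |Ring.choose r k| := by
  have hprod : (k.factorial : ℤ) * Ring.choose r k = ∏ t ∈ Finset.range k, (r - t) := by
    rw [← descPochhammer_eval_eq_prod_range, Polynomial.eval_eq_smeval,
      Ring.descPochhammer_eq_factorial_smul_choose, nsmul_eq_mul]
  calc |r| ^ k = ∏ _t ∈ Finset.range k, |r| := by rw [Finset.prod_const, Finset.card_range]
    _ ≤ ∏ t ∈ Finset.range k, 2 * |r - t| := by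
        refine Finset.prod_le_prod (fun _ _ => abs_nonneg r) fun t ht => ?_
        have htk : (t : ℤ) < k := by exact_mod_cast Finset.mem_range.1 ht
        have := abs_sub_abs_le_abs_sub r t
        rw [Nat.abs_cast] at this
        linarith
    _ = 2 ^ k * |(k.factorial : ℤ) * Ring.choose r k| := by
        rw [Finset.prod_mul_distrib, Finset.prod_const, Finset.card_range, ← Finset.abs_prod,
          hprod]
    _ = 2 ^ k * k.factorial * |Ring.choose r k| := by
        rw [abs_mul, Nat.abs_cast, mul_assoc]

lemma exists_pos_mul_pow_le {f : ℤ → ℝ} {k : ℕ} {R c : ℝ} (hc : 0 < c)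
    (hone : ∀ r : ℤ, r ≠ 0 → 1 ≤ f r)
    (hlarge : ∀ r : ℤ, R ≤ |(r : ℝ)| → c * |(r : ℝ)| ^ k ≤ f r) :
    ∃ C : ℝ, 0 < C ∧ ∀ r : ℤ, r ≠ 0 → C * |(r : ℝ)| ^ k ≤ f r := by
  refine ⟨min c (|R| ^ k + 1)⁻¹, lt_min hc (by positivity), fun r hr => ?_⟩
  rcases le_or_gt R |(r : ℝ)| with hR | hR
  · exact (mul_le_mul_of_nonneg_right (min_le_left _ _) (by positivity)).trans (hlarge r hR)
  · have hpow : |(r : ℝ)| ^ k ≤ |R| ^ k + 1 :=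
      (pow_le_pow_left₀ (abs_nonneg _) (hR.le.trans (le_abs_self R)) k).trans (by linarith)
    calc min c (|R| ^ k + 1)⁻¹ * |(r : ℝ)| ^ k ≤ (|R| ^ k + 1)⁻¹ * (|R| ^ k + 1) := by
          gcongr
          exact min_le_right _ _
      _ = 1 := inv_mul_cancel₀ (by positivity)
      _ ≤ f r := hone r hr

section Hydra

variable {m : ℕ} {φ : FreeGroup (Fin m) ≃* FreeGroup (Fin m)}

namespace IsHydraAut

lemma apply_of_of_val_eq_succ (hφ : IsHydraAut m φ) {j j' : Fin m} (h : j.val = j'.val + 1) :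
    φ (of j) = of j * of j' := by
  rw [hφ j, if_neg (by omega)]
  congr
  omega

lemma zpow_apply_of_of_val_eq_zero (hφ : IsHydraAut m φ) {j : Fin m} (hj : j.val = 0) (r : ℤ) :
    (φ ^ r) (of j) = of j := by
  have : φ ∈ MulAction.stabilizer (MulAut (FreeGroup (Fin m))) (of j) := by
    rw [MulAction.mem_stabilizer_iff, MulAut.smul_def, hφ j, if_pos hj]
  exact zpow_mem this r

lemma zpow_add_one_apply_of (hφ : IsHydraAut m φ) {j j' : Fin m} (h : j.val = j'.val + 1)
    (r : ℤ) : (φ ^ (r + 1)) (of j) = (φ ^ r) (of j) * (φ ^ r) (of j') := by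
  rw [zpow_add_one, MulAut.mul_apply, hφ.apply_of_of_val_eq_succ h, _root_.map_mul]

lemma norm_zpow_apply_of_le (hφ : IsHydraAut m φ) (j : Fin m) (r : ℤ) :
    (((φ ^ r) (of j)).norm : ℤ) ≤ (|r| + 1) ^ j.val := by
  obtain ⟨k, hk⟩ : ∃ k, j.val = k := ⟨_, rfl⟩
  induction k generalizing j r with
  | zero => simp [hφ.zpow_apply_of_of_val_eq_zero hk, hk]
  | succ k ih =>
    have hk' : k < m := by omega
    rw [hk]
    have := Int.abs_le_add_one_pow_succ_of_abs_sub_le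
      (f := fun r => (((φ ^ r) (of j)).norm : ℤ)) (k := k) ?_ ?_ r
    · simpa using this
    · simp
    · intro r
      rw [hφ.zpow_add_one_apply_of (j' := ⟨k, hk'⟩) hk]
      exact (abs_norm_mul_sub_norm_le _ _).trans (ih ⟨k, hk'⟩ r rfl)

lemma exponentSum_zpow_apply_of (hφ : IsHydraAut m φ) {a : Fin m} (ha : a.val = 0) (j : Fin m)
    (r : ℤ) : (exponentSum a ((φ ^ r) (of j))).toAdd = Ring.choose r j.val := by
  obtain ⟨k, hk⟩ : ∃ k, j.val = k := ⟨_, rfl⟩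
  induction k generalizing j r with
  | zero =>
    rw [hφ.zpow_apply_of_of_val_eq_zero hk, exponentSum_of, if_pos (by omega), hk,
      Ring.choose_zero_right]
  | succ k ih =>
    have hk' : k < m := by omega
    have hstep (r : ℤ) := congrArg (fun g => (exponentSum a g).toAdd)
      (hφ.zpow_add_one_apply_of (j' := ⟨k, hk'⟩) hk r)
    simp only [_root_.map_mul, toAdd_mul, ih ⟨k, hk'⟩ _ rfl] at hstep
    rw [hk]
    induction r using Int.induction_on with
    | zero => simp [exponentSum_of, Fin.ext_iff, hk, ha]
    | succ n ihn => rw [hstep, ihn, Ring.choose_succ_succ, add_comm]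
    | pred n ihn =>
      have := hstep (-n - 1)
      have pascal := Ring.choose_succ_succ ((-n : ℤ) - 1) k
      rw [sub_add_cancel, ihn] at this
      rw [sub_add_cancel] at pascal
      linarith

end IsHydraAut

end Hydra

/-- Lemma 4.2: for `2 ≤ i ≤ m` there are constants `C_i, D_i > 0` with
`C_i |r|^{i-1} ≤ |φ^r(aᵢ)|_F ≤ D_i |r|^{i-1}` for all `r ≠ 0`. -/
theorem stmt_7 (m : ℕ) (hm : 2 ≤ m)
    (φ : FreeGroup (Fin m) ≃* FreeGroup (Fin m)) (hφ : IsHydraAut m φ)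
    (i : ℕ) (him : i ≤ m) :
    ∃ C D : ℝ, 0 < C ∧ 0 < D ∧ ∀ r : ℤ, r ≠ 0 →
      C * |(r : ℝ)| ^ (i - 1) ≤
        (lenF ((φ ^ r) (FreeGroup.of (⟨i - 1, by omega⟩ : Fin m))) : ℝ) ∧
      (lenF ((φ ^ r) (FreeGroup.of (⟨i - 1, by omega⟩ : Fin m))) : ℝ) ≤
        D * |(r : ℝ)| ^ (i - 1) := by
  set j : Fin m := ⟨i - 1, by omega⟩
  set k := i - 1
  have hlarge (r : ℤ) (hr : 2 * k ≤ |(r : ℝ)|) :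
      (2 ^ k * k.factorial : ℝ)⁻¹ * |(r : ℝ)| ^ k ≤ lenF ((φ ^ r) (of j)) := by
    have hchoose := Int.abs_pow_le_two_pow_mul_factorial_mul_abs_choose (k := k) (r := r)
      (by exact_mod_cast hr)
    rw [← hφ.exponentSum_zpow_apply_of (a := ⟨0, by omega⟩) rfl j] at hchoose
    have := abs_exponentSum_le_norm (⟨0, by omega⟩ : Fin m) ((φ ^ r) (of j))
    rw [inv_mul_le_iff₀ (by positivity), lenF_eq_norm]
    exact_mod_cast hchoose.trans (mul_le_mul_of_nonneg_left this (by positivity))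
  obtain ⟨C, hC, hlower⟩ := exists_pos_mul_pow_le (by positivity)
    (fun r _ => by simp [lenF_eq_norm, Nat.one_le_iff_ne_zero, of_ne_one]) hlarge
  refine ⟨C, 2 ^ k, hC, by positivity, fun r hr => ⟨hlower r hr, ?_⟩⟩
  have hupper := hφ.norm_zpow_apply_of_le j r
  have : |r| + 1 ≤ 2 * |r| := by have := Int.one_le_abs hr; linarith
  rw [lenF_eq_norm, ← mul_pow]
  exact_mod_cast hupper.trans (by gcongr)
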